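/- arXiv:1610.05216 — 3 statements merged into one kernel-verified Lean document; each statement's English description precedes it below -/
import Mathlib

section
/- For any real p with 0 < p < 1/100 and any natural numbers n, d ≥ 1, the double sum over ν ≥ d and μ from ⌈ν/2⌉ to ν of (6n/5)·5^ν·C(ν,μ)·p^μ·(1−p)^{n−μ} is bounded above by (6n/5)·∑_{ν≥d} (10 √p)^ν, which equals (6n/5)·(10√p)^d/(1−10√p). -/
theorem surface_code_rejection_bound (p : ℝ) (hp0 : 0 < p) (hp1 : p < 1 / 100)
    (n d : ℕ) (hn : 1 ≤ n) (hd : 1 ≤ d) :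
    (∑' ν : ℕ, if d ≤ ν then
        ∑ μ ∈ Finset.Icc ((ν + 1) / 2) ν,
          (6 * (n : ℝ) / 5) * 5 ^ ν * (Nat.choose ν μ : ℝ) * p ^ μ * (1 - p) ^ (n - μ)
      else 0)
      ≤ (6 * (n : ℝ) / 5) * ∑' ν : ℕ, (if d ≤ ν then (10 * Real.sqrt p) ^ ν else 0) ∧
    (6 * (n : ℝ) / 5) * (∑' ν : ℕ, (if d ≤ ν then (10 * Real.sqrt p) ^ ν else 0))
      = (6 * (n : ℝ) / 5) * ((10 * Real.sqrt p) ^ d / (1 - 10 * Real.sqrt p)) := by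
  have hsp0 : (0:ℝ) ≤ Real.sqrt p := Real.sqrt_nonneg p
  have hsq : Real.sqrt p ^ 2 = p := Real.sq_sqrt hp0.le
  have hsp1 : Real.sqrt p < 1 / 10 := by
    have : Real.sqrt p < Real.sqrt (1/100) := Real.sqrt_lt_sqrt hp0.le hp1
    have h100 : Real.sqrt (1/100 : ℝ) = 1/10 := by
      rw [show (1:ℝ)/100 = (1/10)^2 by norm_num, Real.sqrt_sq (by norm_num)]
    linarith [this, h100.le, h100.ge]
  set r := 10 * Real.sqrt p with hr
  have hr0 : (0:ℝ) ≤ r := by positivity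
  have hr1 : r < 1 := by rw [hr]; linarith
  have hsple1 : Real.sqrt p ≤ 1 := by linarith
  have hp1' : p < 1 := by linarith
  have hsumr : Summable (fun ν : ℕ => r ^ ν) := summable_geometric_of_lt_one hr0 hr1
  have hsumg : Summable (fun ν : ℕ => if d ≤ ν then r ^ ν else 0) := by
    apply Summable.of_nonneg_of_le (fun ν => by positivity)
      (fun ν => by split <;> [exact le_rfl; positivity]) hsumr
  have hsumg' : Summable (fun ν : ℕ => (6 * (n:ℝ) / 5) * if d ≤ ν then r ^ ν else 0) :=
    hsumg.mul_left _
  -- termwise bound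
  have hbound : ∀ ν : ℕ,
      (if d ≤ ν then
        ∑ μ ∈ Finset.Icc ((ν + 1) / 2) ν,
          (6 * (n : ℝ) / 5) * 5 ^ ν * (Nat.choose ν μ : ℝ) * p ^ μ * (1 - p) ^ (n - μ)
      else 0) ≤ (6 * (n:ℝ) / 5) * (if d ≤ ν then r ^ ν else 0) := by
    intro ν
    split
    · have h1 : ∑ μ ∈ Finset.Icc ((ν + 1) / 2) ν,
          (6 * (n : ℝ) / 5) * 5 ^ ν * (Nat.choose ν μ : ℝ) * p ^ μ * (1 - p) ^ (n - μ)
          ≤ (6 * (n : ℝ) / 5) * 5 ^ ν * Real.sqrt p ^ ν *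
            ∑ μ ∈ Finset.Icc ((ν + 1) / 2) ν, (Nat.choose ν μ : ℝ) := by
        rw [Finset.mul_sum]
        apply Finset.sum_le_sum
        intro μ hμ
        obtain ⟨hμ1, hμ2⟩ := Finset.mem_Icc.mp hμ
        have h2μ : ν ≤ 2 * μ := by omega
        have hpow : p ^ μ * (1 - p) ^ (n - μ) ≤ Real.sqrt p ^ ν := by
          have e1 : p ^ μ = Real.sqrt p ^ (2 * μ) := by
            rw [pow_mul, hsq]
          have e2 : Real.sqrt p ^ (2 * μ) ≤ Real.sqrt p ^ ν :=
            pow_le_pow_of_le_one hsp0 hsple1 h2μ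
          have e3 : (1 - p) ^ (n - μ) ≤ 1 := pow_le_one₀ (by linarith) (by linarith)
          calc p ^ μ * (1 - p) ^ (n - μ) ≤ p ^ μ * 1 :=
                mul_le_mul_of_nonneg_left e3 (by positivity)
            _ = p ^ μ := mul_one _
            _ ≤ Real.sqrt p ^ ν := by rw [e1]; exact e2
        calc (6 * (n : ℝ) / 5) * 5 ^ ν * (Nat.choose ν μ : ℝ) * p ^ μ * (1 - p) ^ (n - μ)
            = ((6 * (n : ℝ) / 5) * 5 ^ ν * (Nat.choose ν μ : ℝ)) *
              (p ^ μ * (1 - p) ^ (n - μ)) := by ring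
          _ ≤ ((6 * (n : ℝ) / 5) * 5 ^ ν * (Nat.choose ν μ : ℝ)) * Real.sqrt p ^ ν :=
              mul_le_mul_of_nonneg_left hpow (by positivity)
          _ = (6 * (n : ℝ) / 5) * 5 ^ ν * Real.sqrt p ^ ν * (Nat.choose ν μ : ℝ) := by ring
      have hC : ∑ μ ∈ Finset.Icc ((ν + 1) / 2) ν, (Nat.choose ν μ : ℝ) ≤ 2 ^ ν := by
        have hsub : ∑ μ ∈ Finset.Icc ((ν + 1) / 2) ν, Nat.choose ν μ
            ≤ ∑ μ ∈ Finset.range (ν + 1), Nat.choose ν μ := by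
          apply Finset.sum_le_sum_of_subset
          intro x hx
          simp only [Finset.mem_Icc, Finset.mem_range] at *
          omega
        rw [Nat.sum_range_choose] at hsub
        calc ∑ μ ∈ Finset.Icc ((ν + 1) / 2) ν, (Nat.choose ν μ : ℝ)
            = ((∑ μ ∈ Finset.Icc ((ν + 1) / 2) ν, Nat.choose ν μ : ℕ) : ℝ) := by push_cast; ring
          _ ≤ ((2 ^ ν : ℕ) : ℝ) := by exact_mod_cast hsub
          _ = 2 ^ ν := by push_cast; ring
      calc ∑ μ ∈ Finset.Icc ((ν + 1) / 2) ν,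
            (6 * (n : ℝ) / 5) * 5 ^ ν * (Nat.choose ν μ : ℝ) * p ^ μ * (1 - p) ^ (n - μ)
          ≤ (6 * (n : ℝ) / 5) * 5 ^ ν * Real.sqrt p ^ ν *
            ∑ μ ∈ Finset.Icc ((ν + 1) / 2) ν, (Nat.choose ν μ : ℝ) := h1
        _ ≤ (6 * (n : ℝ) / 5) * 5 ^ ν * Real.sqrt p ^ ν * 2 ^ ν :=
            mul_le_mul_of_nonneg_left hC (by positivity)
        _ = (6 * (n : ℝ) / 5) * r ^ ν := by
            rw [hr, mul_pow]
            ring_nf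
            rw [show (10:ℝ) ^ ν = 5 ^ ν * 2 ^ ν by rw [← mul_pow]; norm_num]
            ring
    · simp
  have hnonneg : ∀ ν : ℕ, 0 ≤ (if d ≤ ν then
        ∑ μ ∈ Finset.Icc ((ν + 1) / 2) ν,
          (6 * (n : ℝ) / 5) * 5 ^ ν * (Nat.choose ν μ : ℝ) * p ^ μ * (1 - p) ^ (n - μ)
      else 0) := by
    intro ν
    split
    · apply Finset.sum_nonneg
      intro μ _
      have : (0:ℝ) ≤ 1 - p := by linarith
      positivity
    · exact le_rfl
  have hsumL : Summable (fun ν : ℕ => if d ≤ ν then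
        ∑ μ ∈ Finset.Icc ((ν + 1) / 2) ν,
          (6 * (n : ℝ) / 5) * 5 ^ ν * (Nat.choose ν μ : ℝ) * p ^ μ * (1 - p) ^ (n - μ)
      else 0) := Summable.of_nonneg_of_le hnonneg hbound hsumg'
  have hkey : (∑' ν : ℕ, (if d ≤ ν then r ^ ν else 0)) = r ^ d / (1 - r) := by
    have hsplit := Summable.sum_add_tsum_nat_add d hsumg
    have hzero : ∑ i ∈ Finset.range d, (if d ≤ i then r ^ i else 0) = 0 := by
      apply Finset.sum_eq_zero
      intro i hi
      rw [if_neg (by simp at hi; omega)]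
    rw [hzero, zero_add] at hsplit
    have hshift : (∑' i : ℕ, (if d ≤ i + d then r ^ (i + d) else 0))
        = ∑' i : ℕ, r ^ i * r ^ d := by
      apply tsum_congr
      intro i
      rw [if_pos (by omega), pow_add]
    rw [← hsplit, hshift, tsum_mul_right, tsum_geometric_of_lt_one hr0 hr1]
    field_simp
  constructor
  · calc (∑' ν : ℕ, if d ≤ ν then
        ∑ μ ∈ Finset.Icc ((ν + 1) / 2) ν,
          (6 * (n : ℝ) / 5) * 5 ^ ν * (Nat.choose ν μ : ℝ) * p ^ μ * (1 - p) ^ (n - μ)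
      else 0)
        ≤ ∑' ν : ℕ, (6 * (n:ℝ) / 5) * (if d ≤ ν then r ^ ν else 0) :=
          Summable.tsum_le_tsum hbound hsumL hsumg'
      _ = (6 * (n:ℝ) / 5) * ∑' ν : ℕ, (if d ≤ ν then r ^ ν else 0) := tsum_mul_left
  · rw [hkey]
end

section
/- Suppose the error pattern on a bipartite graph state is Z^x|G⟩ with x = (x_B, x_W). If one measures all qubits in W in the Z basis obtaining outcomes z_W and all qubits in B in the X basis obtaining outcomes x_B', then x_B' + A^T z_W equals the B-component x_B of the error (modulo stabilizer relations); hence the test 'x_B' + A^T z_W ∈ S_B' accepts exactly when the X-type error on B is in S_B. -/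
/-- Configurations of `nB + nW` qubits in the computational basis. -/
abbrev Cfg (nB nW : ℕ) := (Fin nB → ZMod 2) × (Fin nW → ZMod 2)

/-- The bipartite graph state with biadjacency matrix `A` over `F₂`. -/
noncomputable def graphState {nB nW : ℕ} (A : Matrix (Fin nW) (Fin nB) (ZMod 2)) :
    Cfg nB nW → ℂ := fun s =>
  (-1 : ℂ) ^ ((∑ w, s.2 w * A.mulVec s.1 w : ZMod 2)).val
    / (Real.sqrt (2 ^ (nB + nW)) : ℂ)

/-- Pauli `Z` operators applied at the positions where `x ∈ F₂ⁿ` equals `1`. -/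
def Zop {nB nW : ℕ} (x : Cfg nB nW) (ψ : Cfg nB nW → ℂ) : Cfg nB nW → ℂ :=
  fun s =>
    (-1 : ℂ) ^ ((∑ i, x.1 i * s.1 i) + (∑ w, x.2 w * s.2 w) : ZMod 2).val * ψ s

/-- Amplitude of obtaining `X`-basis outcomes `xB'` on the `B` qubits and
`Z`-basis outcomes `zW` on the `W` qubits, when measuring the state `ψ`. -/
noncomputable def outcomeAmp {nB nW : ℕ} (ψ : Cfg nB nW → ℂ)
    (xB' : Fin nB → ZMod 2) (zW : Fin nW → ZMod 2) : ℂ :=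
  ∑ sB : Fin nB → ZMod 2,
    (-1 : ℂ) ^ ((∑ i, xB' i * sB i : ZMod 2)).val * ψ (sB, zW)

lemma neg_one_pow_mod_two (n : ℕ) : ((-1:ℂ))^(n % 2) = (-1)^n := by
  conv_rhs => rw [← Nat.mod_add_div n 2]
  rw [pow_add, pow_mul]
  norm_num

lemma sign_add (a b : ZMod 2) : ((-1:ℂ))^((a+b).val) = (-1)^a.val * (-1)^b.val := by
  rw [ZMod.val_add, neg_one_pow_mod_two, pow_add]

lemma chi_eq_zero {n : ℕ} (v : Fin n → ZMod 2) (hv : v ≠ 0) :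
    ∑ s : Fin n → ZMod 2, ((-1:ℂ))^((∑ i, v i * s i : ZMod 2)).val = 0 := by
  obtain ⟨i, hi⟩ : ∃ i, v i ≠ 0 := by
    by_contra hc
    push_neg at hc
    exact hv (funext hc)
  have hvi : v i = 1 := by
    have : ∀ a : ZMod 2, a ≠ 0 → a = 1 := by decide
    exact this _ hi
  set f : (Fin n → ZMod 2) → ℂ := fun s => ((-1:ℂ))^((∑ j, v j * s j : ZMod 2)).val with hf
  set e : Fin n → ZMod 2 := Pi.single i 1 with he
  have key : ∀ s : Fin n → ZMod 2, f (s + e) = - f s := by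
    intro s
    have hs : (∑ j, v j * (s + e) j : ZMod 2) = (∑ j, v j * s j) + 1 := by
      simp only [Pi.add_apply, mul_add, Finset.sum_add_distrib]
      congr 1
      simp [he, Pi.single_apply, mul_ite, Finset.sum_ite_eq', hvi]
    simp only [hf]
    rw [hs, sign_add]
    have h1 : ((1:ZMod 2)).val = 1 := rfl
    rw [h1]
    ring
  have hS : ∑ s : Fin n → ZMod 2, f s = -∑ s : Fin n → ZMod 2, f s := by
    calc ∑ s : Fin n → ZMod 2, f s
        = ∑ s : Fin n → ZMod 2, f (s + e) := (Fintype.sum_equiv (Equiv.addRight e) (fun s => f (s + e)) f (fun s => rfl)).symm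
      _ = ∑ s : Fin n → ZMod 2, -f s := Finset.sum_congr rfl (fun s _ => key s)
      _ = -∑ s : Fin n → ZMod 2, f s := by rw [Finset.sum_neg_distrib]
  have h2 : (2:ℂ) * ∑ s : Fin n → ZMod 2, f s = 0 := by linear_combination hS
  exact (mul_eq_zero.mp h2).resolve_left two_ne_zero

theorem test_TB_syndrome {nB nW : ℕ} (A : Matrix (Fin nW) (Fin nB) (ZMod 2))
    (x : Cfg nB nW) (S_B : Set (Fin nB → ZMod 2))
    (xB' : Fin nB → ZMod 2) (zW : Fin nW → ZMod 2)
    (h : outcomeAmp (Zop x (graphState A)) xB' zW ≠ 0) :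
    xB' + A.transpose.mulVec zW = x.1 ∧
      (xB' + A.transpose.mulVec zW ∈ S_B ↔ x.1 ∈ S_B) := by
  set v : Fin nB → ZMod 2 := xB' + x.1 + A.transpose.mulVec zW with hv
  have key : outcomeAmp (Zop x (graphState A)) xB' zW =
      ((-1:ℂ)^((∑ w, x.2 w * zW w : ZMod 2)).val / (Real.sqrt (2 ^ (nB + nW)) : ℂ)) *
      ∑ s : Fin nB → ZMod 2, ((-1:ℂ))^((∑ i, v i * s i : ZMod 2)).val := by
    rw [outcomeAmp, Finset.mul_sum]
    refine Finset.sum_congr rfl (fun sB _ => ?_)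
    have hc : (∑ w, zW w * A.mulVec sB w : ZMod 2) =
        ∑ i, A.transpose.mulVec zW i * sB i := by
      simp only [Matrix.mulVec, Matrix.transpose_apply, dotProduct, Finset.mul_sum,
        Finset.sum_mul]
      rw [Finset.sum_comm]
      refine Finset.sum_congr rfl (fun j _ => Finset.sum_congr rfl (fun w _ => by ring))
    have hvs : (∑ i, v i * sB i : ZMod 2) =
        (∑ i, xB' i * sB i) + (∑ i, x.1 i * sB i) + (∑ i, A.transpose.mulVec zW i * sB i) := by
      simp only [hv, Pi.add_apply, add_mul, Finset.sum_add_distrib]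
    rw [Zop, graphState]
    simp only
    rw [hvs, ← hc, sign_add, sign_add, sign_add]
    field_simp
  have hv0 : v = 0 := by
    by_contra hvne
    rw [key, chi_eq_zero v hvne, mul_zero] at h
    exact h rfl
  have h1 : xB' + A.transpose.mulVec zW = x.1 := by
    funext j
    have := congrFun hv0 j
    simp only [hv, Pi.add_apply, Pi.zero_apply] at this
    have h2 : xB' j + A.transpose.mulVec zW j + (x.1 j + x.1 j) = x.1 j := by
      rw [show xB' j + A.transpose.mulVec zW j + (x.1 j + x.1 j)
        = (xB' j + x.1 j + A.transpose.mulVec zW j) + x.1 j by ring, this, zero_add]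
    have hb : x.1 j + x.1 j = 0 := by
      have : ∀ a : ZMod 2, a + a = 0 := by decide
      exact this _
    rwa [hb, add_zero] at h2
  exact ⟨h1, by rw [h1]⟩
end

section
/- Let A be an n_W × n_B matrix over F₂ and let S_B ⊆ F₂^{n_B}. Fix an error string e ∈ F₂^{n_B} on the B qubits of the bipartite graph state. Under the test T_B (measure W in Z basis getting z_W, measure B in X basis getting x_B), the quantity x_B + A^T z_W is independent of the random measurement outcomes z_W and equals e; hence the test outcome 'x_B + A^T z_W ∈ S_B' is deterministic given the error e. -/
open Matrix

noncomputable def signChar : AddChar (ZMod 2) ℂ where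
  toFun a := (-1) ^ a.val
  map_zero_eq_one' := by simp
  map_add_eq_mul' a b := by rw [ZMod.val_add, ← neg_one_pow_eq_pow_mod_two, pow_add]

lemma signChar_apply (a : ZMod 2) : signChar a = (-1) ^ a.val := rfl

lemma signChar_ne_zero : signChar ≠ 0 :=
  AddChar.ne_zero_iff.2 ⟨1, by norm_num [signChar_apply, ZMod.val_one]⟩

lemma sum_addChar_dotProduct_eq_zero {ι F R : Type*} [Fintype ι] [DecidableEq ι] [Field F]
    [Fintype F] [CommRing R] [IsDomain R] [CharZero R] {ψ : AddChar F R} (hψ : ψ ≠ 0)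
    {v : ι → F} (hv : v ≠ 0) : ∑ s, ψ (v ⬝ᵥ s) = 0 := by
  obtain ⟨a, ha⟩ := AddChar.ne_zero_iff.1 hψ
  obtain ⟨i, hi⟩ := Function.ne_iff.1 hv
  let φ : AddChar (ι → F) R := ψ.compAddMonoidHom (AddMonoidHom.mk' (v ⬝ᵥ ·) (dotProduct_add v))
  refine (AddChar.sum_eq_zero_iff_ne_zero (ψ := φ)).2
    (AddChar.ne_zero_iff.2 ⟨Pi.single i (a / v i), ?_⟩)
  simpa [φ, dotProduct_single, mul_div_cancel₀ _ hi] using ha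

lemma outcomeAmp_Zop_graphState {nB nW : ℕ} (A : Matrix (Fin nW) (Fin nB) (ZMod 2))
    (e xB' : Fin nB → ZMod 2) (zW : Fin nW → ZMod 2) :
    outcomeAmp (Zop (e, 0) (graphState A)) xB' zW =
      (∑ sB, signChar ((xB' + Aᵀ *ᵥ zW + e) ⬝ᵥ sB)) / (Real.sqrt (2 ^ (nB + nW)) : ℂ) := by
  rw [outcomeAmp, Finset.sum_div]
  refine Finset.sum_congr rfl fun sB _ => ?_
  change signChar (xB' ⬝ᵥ sB) * (signChar (e ⬝ᵥ sB + 0 ⬝ᵥ zW) *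
    (signChar (zW ⬝ᵥ A *ᵥ sB) / _)) = _
  rw [zero_dotProduct, add_zero, dotProduct_mulVec, ← mulVec_transpose, add_dotProduct,
    add_dotProduct, AddChar.map_add_eq_mul, AddChar.map_add_eq_mul]
  ring

/-- Under test `T_B`, on the state `Z^{(e,0)}|G⟩` the syndrome
`x_B + Aᵀ z_W` is deterministic: any outcome with nonzero amplitude
satisfies `x_B + Aᵀ z_W = e`. -/
theorem test_TB_deterministic {nB nW : ℕ} (A : Matrix (Fin nW) (Fin nB) (ZMod 2))
    (e : Fin nB → ZMod 2) :
    ∀ (xB' : Fin nB → ZMod 2) (zW : Fin nW → ZMod 2),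
      outcomeAmp (Zop (e, 0) (graphState A)) xB' zW ≠ 0 →
        xB' + A.transpose.mulVec zW = e := by
  intro xB' zW h
  have hv : xB' + Aᵀ *ᵥ zW + e = 0 := by
    by_contra hv
    rw [outcomeAmp_Zop_graphState, sum_addChar_dotProduct_eq_zero signChar_ne_zero hv,
      zero_div] at h
    exact h rfl
  rwa [← ZModModule.sub_eq_add, sub_eq_zero] at hv
end
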